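/- arXiv:2505.08593 — 6 statements merged into one kernel-verified Lean document; each statement's English description precedes it below -/
import Mathlib

section
/- Let r > 0 and let a, b be two distinct points of ℝ³. Set n = (a − b)/‖a − b‖ and d = r + (1/2)·‖a − b‖. If p, q ∈ ℝ³ satisfy ⟨p − b, n⟩ ≥ d and ⟨q − a, −n⟩ ≥ d, then ‖p − q‖ ≥ 2r. (This is the safety guarantee of the modified Buffered Voronoi Cell: two agents whose positions satisfy their respective half-space constraints are at Euclidean distance at least 2r.) -/
open scoped RealInnerProductSpace

/-- Safety guarantee of the modified Buffered Voronoi Cell: if two points `p`, `q`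
satisfy their respective buffered half-space constraints built from the mutually
closest points `a`, `b`, then they are at distance at least `2r`. -/
theorem bvc_safety (r : ℝ) (hr : 0 < r)
    (a b : EuclideanSpace ℝ (Fin 3)) (hab : a ≠ b)
    (n : EuclideanSpace ℝ (Fin 3)) (hn : n = ‖a - b‖⁻¹ • (a - b))
    (d : ℝ) (hd : d = r + (1 / 2) * ‖a - b‖)
    (p q : EuclideanSpace ℝ (Fin 3))
    (hp : ⟪p - b, n⟫ ≥ d) (hq : ⟪q - a, -n⟫ ≥ d) :
    ‖p - q‖ ≥ 2 * r := by
  have hab' : ‖a - b‖ ≠ 0 := by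
    simpa [sub_eq_zero] using hab
  have hn1 : ‖n‖ = 1 := by
    rw [hn, norm_smul, norm_inv, norm_norm, inv_mul_cancel₀ hab']
  have habn : ⟪a - b, n⟫ = ‖a - b‖ := by
    rw [hn, real_inner_smul_right, real_inner_self_eq_norm_sq]
    field_simp
  have hq' : ⟪q - a, n⟫ ≤ -d := by
    have := hq
    rw [inner_neg_right] at this
    linarith
  have hsplit : ⟪p - q, n⟫ = ⟪p - b, n⟫ - ⟪q - a, n⟫ - ⟪a - b, n⟫ := by
    have : p - q = (p - b) - (q - a) - (a - b) := by abel
    rw [this, inner_sub_left, inner_sub_left]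
  have key : (2 : ℝ) * r ≤ ⟪p - q, n⟫ := by
    rw [hsplit, habn]
    linarith [hd]
  calc 2 * r ≤ ⟪p - q, n⟫ := key
    _ ≤ ‖p - q‖ * ‖n‖ := real_inner_le_norm _ _
    _ = ‖p - q‖ := by rw [hn1, mul_one]
end

section
/- Let r > 0 and let d be a real number with d > 2√2·r. Then for every real Δ with 0 ≤ Δ ≤ 2r, both d − 2r + Δ > Δ and d − √(4r² − Δ²) > Δ hold. (This is the key step of the deadlock-resolution theorem: in a deadlock, the blocking agent of an agent with subgoal-to-waypoint distance Δ would have strictly larger subgoal-to-waypoint distance, in both cases of the formula Δ(B(q)) = d − 2r + Δ(q) if D > 0 and Δ(B(q)) = d − √(4r² − Δ(q)²) otherwise.) -/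
/-- Key step of the deadlock-resolution theorem: if the grid size satisfies
`d > 2√2·r`, then for any `Δ ∈ [0, 2r]`, the blocking agent's
subgoal-to-waypoint distance is strictly larger in both cases of the formula. -/
theorem blocking_agent_strictly_larger (r d Δ : ℝ) (hr : 0 < r)
    (hd : d > 2 * Real.sqrt 2 * r) (hΔ0 : 0 ≤ Δ) (hΔ : Δ ≤ 2 * r) :
    d - 2 * r + Δ > Δ ∧ d - Real.sqrt (4 * r ^ 2 - Δ ^ 2) > Δ := by
  have h2 : (1:ℝ) < Real.sqrt 2 := by
    rw [show (1:ℝ) = Real.sqrt 1 by simp]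
    exact Real.sqrt_lt_sqrt (by norm_num) (by norm_num)
  constructor
  · nlinarith
  · set s := Real.sqrt (4 * r ^ 2 - Δ ^ 2) with hs
    have hnn : 0 ≤ 4 * r ^ 2 - Δ ^ 2 := by nlinarith
    have hs0 : 0 ≤ s := Real.sqrt_nonneg _
    have hsq : s ^ 2 = 4 * r ^ 2 - Δ ^ 2 := Real.sq_sqrt hnn
    have key : Δ + s ≤ 2 * Real.sqrt 2 * r := by
      have h8 : (Δ + s) ^ 2 ≤ (2 * Real.sqrt 2 * r) ^ 2 := by
        have : Real.sqrt 2 ^ 2 = 2 := Real.sq_sqrt (by norm_num)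
        nlinarith [sq_nonneg (Δ - s)]
      nlinarith [h8, mul_pos (mul_pos two_pos (Real.sqrt_pos.mpr (by norm_num : (0:ℝ)<2))) hr, sq_nonneg (Δ + s - 2 * Real.sqrt 2 * r)]
    linarith
end

section
/- Let w_e > 0, w_a > 0, d > 0, and Δt > 0 be real numbers. For every real λ with 0 < λ < (2·w_e·d·Δt²)/(w_e·Δt⁴ + 2·w_a), one has w_e·d² − w_e·(d − λ·Δt²)² − 2·w_a·λ² > 0. (This is the cost comparison showing that, for a deadlocked agent whose position and subgoal differ by distance d, the zero control input is not optimal for the trajectory optimization, since the constructed nudge control ũ achieves strictly smaller cost.) -/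
/-- Cost comparison showing the zero control is not optimal for a deadlocked
agent: for any sufficiently small `λ > 0`, the nudge control achieves a
strictly smaller cost. -/
theorem nudge_control_cost_decrease (we wa d Δt lam : ℝ)
    (hwe : 0 < we) (hwa : 0 < wa) (hd : 0 < d) (hΔt : 0 < Δt)
    (hlam0 : 0 < lam)
    (hlam : lam < (2 * we * d * Δt ^ 2) / (we * Δt ^ 4 + 2 * wa)) :
    we * d ^ 2 - we * (d - lam * Δt ^ 2) ^ 2 - 2 * wa * lam ^ 2 > 0 := by
  have hden : 0 < we * Δt ^ 4 + 2 * wa := by positivity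
  have h : lam * (we * Δt ^ 4 + 2 * wa) < 2 * we * d * Δt ^ 2 :=
    (lt_div_iff₀ hden).mp hlam
  nlinarith [mul_pos hlam0 (sub_pos.mpr h)]
end

section
/- Let Δt > 0 and λ > 0 be reals, let p, g ∈ ℝ³ with p ≠ g and λ·Δt² ≤ ‖g − p‖, and set n = (g − p)/‖g − p‖. Define sequences u, v, q : ℕ → ℝ³ by u(0) = λ·n, u(1) = −λ·n, u(k) = 0 for k ≥ 2; v(0) = 0 and v(k+1) = v(k) + Δt·u(k); q(0) = p and q(k+1) = q(k) + Δt·v(k) + (Δt²/2)·u(k). Then: (i) q(k) lies on the closed segment [p, g] for every k ∈ ℕ; (ii) v(k) = 0 for every k ≥ 2 (in particular the final-stop constraint holds); (iii) ‖v(k)‖ ≤ λ·Δt and ‖u(k)‖ ≤ λ for every k ∈ ℕ; and (iv) q(k) = p + λ·Δt²·n for every k ≥ 2. (This is the explicit feasible nudge control constructed in the deadlock-resolution lemma, whose resulting trajectory stays on the line segment from the agent's position to its subgoal, satisfies the velocity and input bounds with λ·Δt and λ respectively, and ends at rest strictly closer to the subgoal.) -/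
/-- Explicit feasible nudge control for the deadlock-resolution lemma:
the resulting discretized double-integrator trajectory stays on the segment
`[p, g]`, satisfies the velocity and input bounds `λ·Δt` and `λ`, stops
after two steps, and ends at `p + λ·Δt²·n`. -/
theorem nudge_control_feasible (Δt lam : ℝ) (hΔt : 0 < Δt) (hlam : 0 < lam)
    (p g : EuclideanSpace ℝ (Fin 3)) (hpg : p ≠ g)
    (hsmall : lam * Δt ^ 2 ≤ ‖g - p‖)
    (n : EuclideanSpace ℝ (Fin 3)) (hn : n = ‖g - p‖⁻¹ • (g - p))
    (u v q : ℕ → EuclideanSpace ℝ (Fin 3))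
    (hu0 : u 0 = lam • n) (hu1 : u 1 = -(lam • n))
    (hu : ∀ k, 2 ≤ k → u k = 0)
    (hv0 : v 0 = 0) (hv : ∀ k, v (k + 1) = v k + Δt • u k)
    (hq0 : q 0 = p)
    (hq : ∀ k, q (k + 1) = q k + Δt • v k + (Δt ^ 2 / 2) • u k) :
    (∀ k, q k ∈ segment ℝ p g) ∧
    (∀ k, 2 ≤ k → v k = 0) ∧
    (∀ k, ‖v k‖ ≤ lam * Δt ∧ ‖u k‖ ≤ lam) ∧
    (∀ k, 2 ≤ k → q k = p + (lam * Δt ^ 2) • n) := by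
  have hgp : g - p ≠ 0 := sub_ne_zero.mpr (Ne.symm hpg)
  have hnorm : 0 < ‖g - p‖ := norm_pos_iff.mpr hgp
  have hnn : ‖n‖ = 1 := by
    rw [hn, norm_smul, norm_inv, norm_norm, inv_mul_cancel₀ (ne_of_gt hnorm)]
  -- velocities
  have hv1 : v 1 = (lam * Δt) • n := by
    rw [hv 0, hv0, hu0, zero_add, smul_smul, mul_comm]
  have hv2 : ∀ k, 2 ≤ k → v k = 0 := by
    intro k hk
    induction k with
    | zero => omega
    | succ m ih =>
      rcases Nat.lt_or_ge m 2 with hm | hm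
      · interval_cases m
        · omega
        · rw [hv 1, hv1, hu1, smul_neg, smul_smul, mul_comm]
          abel
      · rw [hv m, ih hm, hu m hm, smul_zero, add_zero]
  -- positions
  have hq1 : q 1 = p + (lam * Δt ^ 2 / 2) • n := by
    rw [hq 0, hq0, hv0, hu0, smul_zero, add_zero, smul_smul]
    ring_nf
  have hq2 : ∀ k, 2 ≤ k → q k = p + (lam * Δt ^ 2) • n := by
    intro k hk
    induction k with
    | zero => omega
    | succ m ih =>
      rcases Nat.lt_or_ge m 2 with hm | hm
      · interval_cases m
        · omega
        · rw [hq 1, hq1, hv1, hu1, smul_neg, smul_smul, smul_smul]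
          module
      · rw [hq m, ih hm, hv2 m hm, hu m hm, smul_zero, smul_zero, add_zero, add_zero]
  -- segment membership helper
  have hseg : ∀ c : ℝ, 0 ≤ c → c ≤ lam * Δt ^ 2 → p + c • n ∈ segment ℝ p g := by
    intro c hc0 hc1
    rw [segment_eq_image']
    refine ⟨c / ‖g - p‖, ⟨div_nonneg hc0 hnorm.le, ?_⟩, ?_⟩
    · exact (div_le_one hnorm).mpr (hc1.trans hsmall)
    · rw [hn, smul_smul, div_eq_mul_inv]
  have hlt2 : (0:ℝ) < lam * Δt ^ 2 := by positivity
  refine ⟨?_, hv2, ?_, hq2⟩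
  · intro k
    match k with
    | 0 => rw [hq0]; exact left_mem_segment ℝ p g
    | 1 =>
      rw [hq1]
      exact hseg _ (by positivity) (by linarith)
    | (m+2) =>
      rw [hq2 (m+2) (by omega)]
      exact hseg _ hlt2.le le_rfl
  · intro k
    constructor
    · match k with
      | 0 => rw [hv0, norm_zero]; positivity
      | 1 =>
        rw [hv1, norm_smul, hnn, mul_one, Real.norm_eq_abs,
          abs_of_pos (by positivity)]
      | (m+2) =>
        rw [hv2 (m+2) (by omega), norm_zero]; positivity
    · match k with
      | 0 =>
        rw [hu0, norm_smul, hnn, mul_one, Real.norm_eq_abs, abs_of_pos hlam]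
      | 1 =>
        rw [hu1, norm_neg, norm_smul, hnn, mul_one, Real.norm_eq_abs,
          abs_of_pos hlam]
      | (m+2) =>
        rw [hu (m+2) (by omega), norm_zero]; exact hlam.le
end

section
/- Let S₁ and S₂ be closed line segments in ℝ³, let r > 0, and suppose a ∈ S₁ and b ∈ S₂ are a pair of points achieving the minimum of ‖x − y‖ over x ∈ S₁, y ∈ S₂, with ‖a − b‖ ≥ 2r. Set n = (a − b)/‖a − b‖ and d = r + (1/2)·‖a − b‖. Then every x ∈ S₁ satisfies ⟨x − b, n⟩ ≥ d. (Hence the modified Buffered Voronoi Cell half-space of an agent contains the agent's entire position–subgoal segment whenever the two agents' segments are separated by distance at least 2r, so the constraint never blocks the agent from converging to its own subgoal.) -/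
open scoped RealInnerProductSpace

/-- The modified Buffered Voronoi Cell half-space of an agent contains the
agent's whole position–subgoal segment whenever the two segments are
mutually at distance at least `2r`. -/
theorem bvc_contains_segment (r : ℝ) (hr : 0 < r)
    (p₁ g₁ p₂ g₂ a b : EuclideanSpace ℝ (Fin 3))
    (ha : a ∈ segment ℝ p₁ g₁) (hb : b ∈ segment ℝ p₂ g₂)
    (hmin : ∀ x ∈ segment ℝ p₁ g₁, ∀ y ∈ segment ℝ p₂ g₂,
      ‖a - b‖ ≤ ‖x - y‖)
    (hdist : 2 * r ≤ ‖a - b‖)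
    (n : EuclideanSpace ℝ (Fin 3)) (hn : n = ‖a - b‖⁻¹ • (a - b))
    (d : ℝ) (hd : d = r + (1 / 2) * ‖a - b‖) :
    ∀ x ∈ segment ℝ p₁ g₁, ⟪x - b, n⟫ ≥ d := by
  intro x hx
  have hab : (0:ℝ) < ‖a - b‖ := lt_of_lt_of_le (by linarith) hdist
  set c : ℝ := ⟪x - a, a - b⟫ with hc
  have key : 0 ≤ c := by
    by_contra h
    push_neg at h
    set M : ℝ := ‖x - a‖ ^ 2 with hM
    have hM0 : 0 ≤ M := sq_nonneg _
    set t : ℝ := min 1 ((-c) / (M + 1)) with ht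
    have ht0 : 0 < t := lt_min one_pos (div_pos (by linarith) (by linarith))
    have ht1 : t ≤ 1 := min_le_left _ _
    have hmem : (1 - t) • a + t • x ∈ segment ℝ p₁ g₁ :=
      (convex_segment p₁ g₁) ha hx (by linarith) (le_of_lt ht0) (by ring)
    have h2 := hmin ((1 - t) • a + t • x) hmem b hb
    have heq : (1 - t) • a + t • x - b = (a - b) + t • (x - a) := by
      module
    rw [heq] at h2
    have hsq : ‖a - b‖ ^ 2 ≤ ‖(a - b) + t • (x - a)‖ ^ 2 := by
      nlinarith [norm_nonneg ((a - b) + t • (x - a)), norm_nonneg (a - b)]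
    have hexp : ‖(a - b) + t • (x - a)‖ ^ 2 = ‖a - b‖ ^ 2 + 2 * t * c + t ^ 2 * M := by
      rw [norm_add_sq_real, real_inner_smul_right, norm_smul, real_inner_comm]
      rw [← hc]
      simp [abs_of_pos ht0, mul_pow]
      ring
    have htM : t * M ≤ -c := by
      have h1 : t ≤ (-c) / (M + 1) := min_le_right _ _
      calc t * M ≤ ((-c) / (M + 1)) * M := by nlinarith
        _ ≤ -c := by
            rw [div_mul_eq_mul_div, div_le_iff₀ (by linarith)]
            nlinarith
    nlinarith
  have hinner : ⟪x - b, a - b⟫ = c + ‖a - b‖ ^ 2 := by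
    have hxb : x - b = (x - a) + (a - b) := by module
    rw [hxb, inner_add_left, ← hc, real_inner_self_eq_norm_sq]
  have hfin : ⟪x - b, n⟫ = ‖a - b‖⁻¹ * (c + ‖a - b‖ ^ 2) := by
    rw [hn, real_inner_smul_right, hinner]
  rw [hfin, hd, ge_iff_le, ← sub_nonneg]
  have : ‖a - b‖⁻¹ * (c + ‖a - b‖ ^ 2) - (r + 1 / 2 * ‖a - b‖)
      = ‖a - b‖⁻¹ * c + (‖a - b‖ - r - 1 / 2 * ‖a - b‖) := by
    field_simp
    ring
  rw [this]
  have h1 : 0 ≤ ‖a - b‖⁻¹ * c := by positivity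
  linarith
end

section
/- Let w ∈ ℝ³ and let g : ℕ → ℝ³ be a sequence such that g(h+1) lies on the closed line segment [g(h), w] for every h ∈ ℕ. Then the sequence g converges (to some point of ℝ³). (This is the core of the subgoal-convergence lemma: since each new subgoal is constrained to the segment between the previous subgoal and the fixed waypoint, the distance to the waypoint is nonincreasing, the consecutive displacements telescope, and the subgoal sequence converges.) -/
open Filter Topology

/-- Subgoal convergence: if each new subgoal lies on the segment between the
previous subgoal and a fixed waypoint `w`, the subgoal sequence converges. -/
theorem subgoal_convergence (w : EuclideanSpace ℝ (Fin 3))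
    (g : ℕ → EuclideanSpace ℝ (Fin 3))
    (hg : ∀ h : ℕ, g (h + 1) ∈ segment ℝ (g h) w) :
    ∃ L : EuclideanSpace ℝ (Fin 3), Tendsto g atTop (𝓝 L) := by
  set d : ℕ → ℝ := fun h => dist (g h) w with hd
  have key : ∀ h, dist (g h) (g (h + 1)) = d h - d (h + 1) := by
    intro h
    have := dist_add_dist_of_mem_segment (hg h)
    simp only [hd]
    linarith
  have hsum : Summable (fun h => d h - d (h + 1)) := by
    apply summable_of_sum_range_le (c := d 0)
    · intro n; rw [← key]; exact dist_nonneg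
    · intro n
      rw [Finset.sum_range_sub' d n]
      have : (0:ℝ) ≤ d n := dist_nonneg
      linarith
  have hc : CauchySeq g :=
    cauchySeq_of_dist_le_of_summable _ (fun n => (key n).le) hsum
  exact cauchySeq_tendsto_of_complete hc
end
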